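/- A polynomial map Φ : ℝ^N → ℝ^M with N < M is not surjective. -/

import Mathlib

open MvPolynomial Set

theorem MvPolynomial.contDiff_pi_eval {𝕜 σ ι : Type*} [NontriviallyNormedField 𝕜]
    [CompleteSpace 𝕜] [Fintype σ] [Fintype ι] {n : WithTop ℕ∞} (P : ι → MvPolynomial σ 𝕜) :
    ContDiff 𝕜 n (fun x : σ → 𝕜 ↦ fun i ↦ eval x (P i)) :=
  contDiff_pi.2 fun i ↦ (AnalyticOnNhd.eval_mvPolynomial (P i)).contDiff

/-- The range of a `C¹` map on `σ → ℝ` has Hausdorff dimension at most `card σ`. -/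
theorem MvPolynomial.dense_compl_range_pi_eval {σ ι : Type*} [Fintype σ] [Fintype ι]
    (hσι : Fintype.card σ < Fintype.card ι) (P : ι → MvPolynomial σ ℝ) :
    Dense (range fun x : σ → ℝ ↦ fun i ↦ eval x (P i))ᶜ :=
  (contDiff_pi_eval P).dense_compl_range_of_finrank_lt_finrank (by simpa using hσι)

theorem stmt_10 (N M : ℕ) (hNM : N < M) (Φ : (Fin N → ℝ) → (Fin M → ℝ))
    (P : Fin M → MvPolynomial (Fin N) ℝ)
    (hΦ : ∀ x j, Φ x j = MvPolynomial.eval x (P j)) :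
    ¬ Function.Surjective Φ := by
  have hΦP : Φ = fun x j ↦ eval x (P j) := funext₂ hΦ
  have hdense : Dense (range Φ)ᶜ := by
    rw [hΦP]
    exact dense_compl_range_pi_eval (by simpa using hNM) P
  intro hsurj
  rw [hsurj.range_eq, compl_univ] at hdense
  exact hdense.nonempty.ne_empty rfl
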